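/- Let B ∈ R^{n×d} have singular value decomposition B = U Σ V^T with singular values σ₁ ≥ … ≥ σ_n ≥ 0, let ξ = σ_{ℓ+1} for some ℓ < n, and set B̂ = Σ̂ V^T where Σ̂ = diag(√max(σ_i² - ξ², 0)). Then B̂^T B̂ ⪯ B^T B and ‖B^T B - B̂^T B̂‖ ≤ ξ², i.e. B^T B - B̂^T B̂ ⪯ ξ² I. -/
import Mathlib


open Matrix

/-- Operator (spectral) norm of a real square matrix. -/
noncomputable def opNorm {d : ℕ} (A : Matrix (Fin d) (Fin d) ℝ) : ℝ :=
  ‖LinearMap.toContinuousLinearMap (Matrix.toEuclideanLin A)‖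

private lemma rect_diag_mul {n d : ℕ} (f : Fin n → ℝ) :
    (Matrix.of fun (i : Fin n) (j : Fin d) => if (i : ℕ) = (j : ℕ) then f i else 0)ᵀ *
      (Matrix.of fun (i : Fin n) (j : Fin d) => if (i : ℕ) = (j : ℕ) then f i else 0) =
    Matrix.diagonal (fun j : Fin d => if h : (j : ℕ) < n then (f ⟨j, h⟩) ^ 2 else 0) := by
  ext j k
  simp only [Matrix.mul_apply, Matrix.transpose_apply, Matrix.of_apply]
  by_cases hjk : j = k
  · subst hjk
    by_cases h : (j : ℕ) < n
    · rw [Finset.sum_eq_single (⟨(j : ℕ), h⟩ : Fin n)]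
      · simp [Matrix.diagonal, h, sq]
      · intro b _ hb
        have : (b : ℕ) ≠ (j : ℕ) := fun e => hb (Fin.ext e)
        simp [this]
      · simp
    · have : ∀ i : Fin n, (i : ℕ) ≠ (j : ℕ) := by
        intro i e
        exact h (e ▸ i.isLt)
      simp [Matrix.diagonal, h, this]
  · have hne : (j : ℕ) ≠ (k : ℕ) := fun e => hjk (Fin.ext e)
    rw [Finset.sum_eq_zero]
    · simp [Matrix.diagonal, hjk]
    · intro i _
      by_cases h1 : (i : ℕ) = (j : ℕ)
      · have h2 : (i : ℕ) ≠ (k : ℕ) := fun e => hne (h1 ▸ e)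
        simp [h2]
      · simp [h1]

private lemma orth_isometry {d : ℕ} {V : Matrix (Fin d) (Fin d) ℝ} (h : Vᵀ * V = 1)
    (u : Fin d → ℝ) : (V *ᵥ u) ⬝ᵥ (V *ᵥ u) = u ⬝ᵥ u := by
  rw [dotProduct_comm, dotProduct_mulVec, ← mulVec_transpose, mulVec_mulVec, h, one_mulVec]

/-- frequent-directions shrinkage step: if `B = U Σ Vᵀ` is an SVD
with singular values `σ₁ ≥ ⋯ ≥ σ_n ≥ 0`, `ξ = σ_{ℓ+1}` and
`B̂ = Σ̂ Vᵀ` with `Σ̂ = diag(√(max(σᵢ² - ξ², 0)))`, then `B̂ᵀB̂ ⪯ BᵀB` and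
`BᵀB - B̂ᵀB̂ ⪯ ξ² I`, hence `‖BᵀB - B̂ᵀB̂‖ ≤ ξ²`. -/
theorem frequent_directions_shrinkage
    (n d ℓ : ℕ) (hℓ : ℓ < n)
    (B : Matrix (Fin n) (Fin d) ℝ)
    (U : Matrix (Fin n) (Fin n) ℝ) (V : Matrix (Fin d) (Fin d) ℝ)
    (hU : Uᵀ * U = 1) (hV1 : Vᵀ * V = 1) (hV2 : V * Vᵀ = 1)
    (σ : Fin n → ℝ) (hσnonneg : ∀ i, 0 ≤ σ i) (hσmono : Antitone σ)
    (Smat : Matrix (Fin n) (Fin d) ℝ)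
    (hSmat : Smat = Matrix.of fun (i : Fin n) (j : Fin d) => if (i : ℕ) = (j : ℕ) then σ i else 0)
    (hB : B = U * Smat * Vᵀ)
    (ξ : ℝ) (hξ : ξ = σ ⟨ℓ, hℓ⟩)
    (Shat : Matrix (Fin n) (Fin d) ℝ)
    (hShat : Shat = Matrix.of fun (i : Fin n) (j : Fin d) =>
      if (i : ℕ) = (j : ℕ) then Real.sqrt (max (σ i ^ 2 - ξ ^ 2) 0) else 0)
    (Bhat : Matrix (Fin n) (Fin d) ℝ) (hBhat : Bhat = Shat * Vᵀ) :
    (Bᵀ * B - Bhatᵀ * Bhat).PosSemidef ∧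
    (ξ ^ 2 • (1 : Matrix (Fin d) (Fin d) ℝ) - (Bᵀ * B - Bhatᵀ * Bhat)).PosSemidef ∧
    opNorm (Bᵀ * B - Bhatᵀ * Bhat) ≤ ξ ^ 2 := by
  have hVH : Vᴴ = Vᵀ := by ext i j; simp [conjTranspose_apply]
  -- the diagonal entries of the difference
  set μ : Fin d → ℝ := fun j => if h : (j : ℕ) < n then min (σ ⟨j, h⟩ ^ 2) (ξ ^ 2) else 0 with hμ
  have hμ0 : ∀ j, 0 ≤ μ j := by
    intro j
    simp only [hμ]
    split
    · exact le_min (sq_nonneg _) (sq_nonneg _)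
    · exact le_refl 0
  have hμξ : ∀ j, μ j ≤ ξ ^ 2 := by
    intro j
    simp only [hμ]
    split
    · exact min_le_right _ _
    · exact sq_nonneg _
  -- S^T S and Ŝ^T Ŝ
  have hSS : Smatᵀ * Smat =
      Matrix.diagonal (fun j : Fin d => if h : (j : ℕ) < n then (σ ⟨j, h⟩) ^ 2 else 0) := by
    rw [hSmat]; exact rect_diag_mul σ
  have hHH : Shatᵀ * Shat =
      Matrix.diagonal (fun j : Fin d =>
        if h : (j : ℕ) < n then max (σ ⟨j, h⟩ ^ 2 - ξ ^ 2) 0 else 0) := by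
    have he : (fun j : Fin d => if h : (j : ℕ) < n then
        Real.sqrt (max (σ ⟨j, h⟩ ^ 2 - ξ ^ 2) 0) ^ 2 else 0)
        = fun j : Fin d => if h : (j : ℕ) < n then max (σ ⟨j, h⟩ ^ 2 - ξ ^ 2) 0 else 0 := by
      funext j
      split
      · exact Real.sq_sqrt (le_max_right _ 0)
      · rfl
    rw [hShat, rect_diag_mul, he]
  -- the key diagonalization
  have hA : Bᵀ * B - Bhatᵀ * Bhat = V * Matrix.diagonal μ * Vᵀ := by
    have e1 : Bᵀ * B = V * (Smatᵀ * Smat) * Vᵀ := by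
      rw [hB]
      simp only [transpose_mul, transpose_transpose, Matrix.mul_assoc]
      rw [← Matrix.mul_assoc Uᵀ U, hU, Matrix.one_mul]
    have e2 : Bhatᵀ * Bhat = V * (Shatᵀ * Shat) * Vᵀ := by
      rw [hBhat]
      simp only [transpose_mul, transpose_transpose, Matrix.mul_assoc]
    have hfun : (fun i : Fin d =>
        (if h : (i : ℕ) < n then σ ⟨i, h⟩ ^ 2 else 0) -
          if h : (i : ℕ) < n then max (σ ⟨i, h⟩ ^ 2 - ξ ^ 2) 0 else 0) = μ := by
      funext j
      simp only [hμ]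
      split
      · rcases le_total (σ ⟨j, by assumption⟩ ^ 2) (ξ ^ 2) with h | h
        · rw [max_eq_right (by linarith), min_eq_left h]; ring
        · rw [max_eq_left (by linarith), min_eq_right h]; ring
      · ring
    rw [e1, e2, hSS, hHH, ← Matrix.sub_mul, ← Matrix.mul_sub, Matrix.diagonal_sub, hfun]
  -- first positivity
  have psd1 : (Bᵀ * B - Bhatᵀ * Bhat).PosSemidef := by
    rw [hA, ← hVH]
    exact (Matrix.posSemidef_diagonal_iff.mpr hμ0).mul_mul_conjTranspose_same V
  -- second positivity
  have hA2 : ξ ^ 2 • (1 : Matrix (Fin d) (Fin d) ℝ) - (Bᵀ * B - Bhatᵀ * Bhat) =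
      V * Matrix.diagonal (fun j => ξ ^ 2 - μ j) * Vᵀ := by
    have hdiag : Matrix.diagonal (fun j : Fin d => ξ ^ 2 - μ j) =
        ξ ^ 2 • (1 : Matrix (Fin d) (Fin d) ℝ) - Matrix.diagonal μ := by
      ext i j
      by_cases h : i = j <;>
        simp [Matrix.diagonal_apply, Matrix.one_apply, h, Matrix.sub_apply, Matrix.smul_apply]
    rw [hA, hdiag]
    conv_rhs => rw [Matrix.mul_sub, Matrix.sub_mul, Matrix.mul_smul, Matrix.mul_one,
      Matrix.smul_mul, hV2]
  have psd2 : (ξ ^ 2 • (1 : Matrix (Fin d) (Fin d) ℝ) - (Bᵀ * B - Bhatᵀ * Bhat)).PosSemidef := by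
    rw [hA2, ← hVH]
    exact (Matrix.posSemidef_diagonal_iff.mpr fun j => sub_nonneg.mpr (hμξ j)).mul_mul_conjTranspose_same V
  refine ⟨psd1, psd2, ?_⟩
  -- the operator norm bound
  have hV1' : (Vᵀ)ᵀ * Vᵀ = 1 := by rw [transpose_transpose, hV2]
  apply ContinuousLinearMap.opNorm_le_bound _ (sq_nonneg ξ)
  intro x
  set v : Fin d → ℝ := (WithLp.equiv 2 (Fin d → ℝ)) x with hv
  set A := Bᵀ * B - Bhatᵀ * Bhat with hAdef
  have hmv : A *ᵥ v = V *ᵥ (Matrix.diagonal μ *ᵥ (Vᵀ *ᵥ v)) := by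
    rw [hA, mulVec_mulVec, mulVec_mulVec]
  set w : Fin d → ℝ := Vᵀ *ᵥ v with hw
  have key : (A *ᵥ v) ⬝ᵥ (A *ᵥ v) ≤ (ξ ^ 2) ^ 2 * (v ⬝ᵥ v) := by
    rw [hmv, orth_isometry hV1]
    have hdd : (Matrix.diagonal μ *ᵥ w) ⬝ᵥ (Matrix.diagonal μ *ᵥ w) =
        ∑ j, (μ j * w j) ^ 2 := by
      simp [dotProduct, mulVec_diagonal, sq, mul_comm, mul_assoc, mul_left_comm]
    have hww : w ⬝ᵥ w = v ⬝ᵥ v := orth_isometry hV1' v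
    rw [hdd, ← hww]
    have : w ⬝ᵥ w = ∑ j, (w j) ^ 2 := by simp [dotProduct, sq]
    rw [this, Finset.mul_sum]
    apply Finset.sum_le_sum
    intro j _
    have h1 : (μ j * w j) ^ 2 = μ j ^ 2 * w j ^ 2 := by ring
    rw [h1]
    apply mul_le_mul_of_nonneg_right _ (sq_nonneg _)
    exact pow_le_pow_left₀ (hμ0 j) (hμξ j) 2
  have hnormx : ‖x‖ = Real.sqrt (∑ j, (v j) ^ 2) := by
    rw [EuclideanSpace.norm_eq]
    congr 1
    apply Finset.sum_congr rfl
    intro j _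
    rw [Real.norm_eq_abs, sq_abs]
    rfl
  have hfx : ‖LinearMap.toContinuousLinearMap (Matrix.toEuclideanLin A) x‖ =
      Real.sqrt (∑ j, ((A *ᵥ v) j) ^ 2) := by
    rw [LinearMap.coe_toContinuousLinearMap']
    rw [show Matrix.toEuclideanLin A x = (WithLp.equiv 2 (Fin d → ℝ)).symm (A *ᵥ v) from
      Matrix.toEuclideanLin_apply A x]
    rw [EuclideanSpace.norm_eq]
    congr 1
    apply Finset.sum_congr rfl
    intro j _
    rw [Real.norm_eq_abs, sq_abs]
    rfl
  rw [hfx, hnormx]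
  have hsum : ∑ j, ((A *ᵥ v) j) ^ 2 ≤ (ξ ^ 2) ^ 2 * ∑ j, (v j) ^ 2 := by
    have e1 : (A *ᵥ v) ⬝ᵥ (A *ᵥ v) = ∑ j, ((A *ᵥ v) j) ^ 2 := by simp [dotProduct, sq]
    have e2 : v ⬝ᵥ v = ∑ j, (v j) ^ 2 := by simp [dotProduct, sq]
    rw [← e1, ← e2]
    exact key
  calc Real.sqrt (∑ j, ((A *ᵥ v) j) ^ 2)
      ≤ Real.sqrt ((ξ ^ 2) ^ 2 * ∑ j, (v j) ^ 2) := Real.sqrt_le_sqrt hsum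
    _ = ξ ^ 2 * Real.sqrt (∑ j, (v j) ^ 2) := by
        rw [Real.sqrt_mul (sq_nonneg _), Real.sqrt_sq (sq_nonneg ξ)]
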